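/- arXiv:2210.03851 — 2 statements merged into one kernel-verified Lean document; each statement's English description precedes it below -/
import Mathlib

section
/- Calibration consistency: after upward message passing to an arbitrary root followed by downward message passing back (computing messages along all reversed edges), the junction tree is calibrated, i.e., for every edge (u,v), the marginal of the absorption at u onto u ∩ v equals the marginal of the absorption at v onto u ∩ v, and both equal the marginalization onto u ∩ v of the full join of all base relations. -/
open Finset

variable {Att : Type*} [Fintype Att] [DecidableEq Att]
variable {Val : Att → Type*} [∀ a, Fintype (Val a)] [∀ a, DecidableEq (Val a)]
variable {D : Type*} [CommSemiring D]

/-- `R` depends only on the attributes in schema `S`. -/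
def DependsOnlyOn (R : (∀ a, Val a) → D) (S : Finset Att) : Prop :=
  ∀ t₁ t₂ : ∀ a, Val a, (∀ a ∈ S, t₁ a = t₂ a) → R t₁ = R t₂

/-- Join of annotated relations: multiply the annotations. -/
def joinRel (R T : (∀ a, Val a) → D) : (∀ a, Val a) → D := fun t => R t * T t

/-- Marginalize out a single attribute `A`: sum over all values of `A`. -/
def marg (A : Att) (R : (∀ a, Val a) → D) : (∀ a, Val a) → D :=
  fun t => ∑ v : Val A, R (Function.update t A v)

/-- Marginalize out all attributes in `E`. -/
def margOver (E : Finset Att) (R : (∀ a, Val a) → D) : (∀ a, Val a) → D :=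
  fun t => ∑ s : ∀ a, Val a, if ∀ a, a ∉ E → s a = t a then R s else 0

set_option linter.unusedSectionVars false

lemma DependsOnlyOn.mono {R : (∀ a, Val a) → D} {S S' : Finset Att}
    (h : DependsOnlyOn R S) (hS : S ⊆ S') : DependsOnlyOn R S' :=
  fun t₁ t₂ ht => h t₁ t₂ fun a ha => ht a (hS ha)

lemma dependsOnlyOn_finset_prod {ι : Type*} {I : Finset ι} {F : ι → (∀ a, Val a) → D}
    {Sch : ι → Finset Att} (h : ∀ i ∈ I, DependsOnlyOn (F i) (Sch i)) :
    DependsOnlyOn (fun t => ∏ i ∈ I, F i t) (I.sup Sch) := by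
  intro t₁ t₂ ht
  refine Finset.prod_congr rfl fun i hi => ?_
  exact h i hi t₁ t₂ fun a ha => ht a (Finset.mem_sup.2 ⟨i, hi, ha⟩)

lemma margOver_mul_left {R T : (∀ a, Val a) → D} {S E : Finset Att}
    (hR : DependsOnlyOn R S) (hSE : Disjoint S E) :
    margOver E (fun t => R t * T t) = fun t => R t * margOver E T t := by
  funext t
  simp only [margOver, Finset.mul_sum]
  refine Finset.sum_congr rfl fun s _ => ?_
  split_ifs with h
  · rw [hR s t (fun a ha => h a (Finset.disjoint_left.mp hSE ha))]
  · rw [mul_zero]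

lemma margOver_margOver {R : (∀ a, Val a) → D} {E F : Finset Att} (hEF : Disjoint E F) :
    margOver E (margOver F R) = margOver (E ∪ F) R := by
  funext t
  simp only [margOver]
  have step1 : ∀ s : ∀ a, Val a,
      (if ∀ a, a ∉ E → s a = t a then ∑ r : ∀ a, Val a, (if ∀ a, a ∉ F → r a = s a then R r else 0) else 0)
      = ∑ r : ∀ a, Val a, (if (∀ a, a ∉ E → s a = t a) ∧ (∀ a, a ∉ F → r a = s a) then R r else 0) := by
    intro s
    split_ifs with h
    · exact Finset.sum_congr rfl fun r _ => if_congr (and_iff_right h).symm rfl rfl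
    · exact (Finset.sum_eq_zero fun r _ => if_neg (fun hc => h hc.1)).symm
  rw [Finset.sum_congr rfl fun s _ => step1 s, Finset.sum_comm]
  refine Finset.sum_congr rfl fun r _ => ?_
  by_cases hr : ∀ a, a ∉ E ∪ F → r a = t a
  · rw [if_pos hr]
    rw [Finset.sum_eq_single (fun a => if a ∈ E then r a else t a)]
    · rw [if_pos]
      constructor
      · intro a ha; simp [ha]
      · intro a ha
        by_cases haE : a ∈ E
        · simp [haE]
        · simp only [haE, if_false]
          exact hr a (by simp [haE, ha])
    · intro s _ hs
      rw [if_neg]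
      rintro ⟨h1, h2⟩
      apply hs
      funext a
      by_cases haE : a ∈ E
      · simp only [haE, if_true]
        exact (h2 a (Finset.disjoint_left.mp hEF haE)).symm
      · simp only [haE, if_false]
        exact h1 a haE
    · intro h; exact absurd (Finset.mem_univ _) h
  · rw [if_neg hr, Finset.sum_eq_zero]
    intro s _
    rw [if_neg]
    rintro ⟨h1, h2⟩
    apply hr
    intro a ha
    simp only [Finset.mem_union, not_or] at ha
    rw [h2 a ha.2, h1 a ha.1]

lemma DependsOnlyOn.margOver {R : (∀ a, Val a) → D} {S E : Finset Att}
    (hR : DependsOnlyOn R S) : DependsOnlyOn (margOver E R) (S \ E) := by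
  intro t₁ t₂ ht
  simp only [_root_.margOver]
  classical
  rw [← Finset.sum_filter, ← Finset.sum_filter]
  refine Finset.sum_bij' (fun s _ => fun a => if a ∈ E then s a else t₂ a)
    (fun s _ => fun a => if a ∈ E then s a else t₁ a) ?_ ?_ ?_ ?_ ?_
  · intro s hs
    simp only [Finset.mem_filter, Finset.mem_univ, true_and] at hs ⊢
    intro a ha; simp [ha]
  · intro s hs
    simp only [Finset.mem_filter, Finset.mem_univ, true_and] at hs ⊢
    intro a ha; simp [ha]
  · intro s hs
    simp only [Finset.mem_filter, Finset.mem_univ, true_and] at hs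
    funext a
    by_cases haE : a ∈ E <;> simp [haE, hs a]
  · intro s hs
    simp only [Finset.mem_filter, Finset.mem_univ, true_and] at hs
    funext a
    by_cases haE : a ∈ E <;> simp [haE, hs a]
  · intro s hs
    simp only [Finset.mem_filter, Finset.mem_univ, true_and] at hs
    apply hR
    intro a haS
    by_cases haE : a ∈ E
    · simp [haE]
    · simp only [haE, if_false]
      rw [hs a haE]
      exact ht a (Finset.mem_sdiff.2 ⟨haS, haE⟩)

lemma margOver_empty (R : (∀ a, Val a) → D) : margOver (∅ : Finset Att) R = R := by
  funext t
  rw [margOver, Finset.sum_eq_single t]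
  · simp
  · intro s _ hst
    rw [if_neg]
    intro h
    exact hst (funext fun a => h a (Finset.notMem_empty a))
  · simp

lemma combine {ι : Type*} [DecidableEq ι] (I : Finset ι) (E Sch : ι → Finset Att)
    (F : ι → (∀ a, Val a) → D) (S₀ : Finset Att) (R₀ : (∀ a, Val a) → D)
    (hR₀ : DependsOnlyOn R₀ S₀)
    (hF : ∀ i ∈ I, DependsOnlyOn (F i) (Sch i))
    (hES : ∀ i ∈ I, E i ⊆ Sch i)
    (hE0 : ∀ i ∈ I, Disjoint (E i) S₀)
    (hEE : ∀ i ∈ I, ∀ j ∈ I, i ≠ j → Disjoint (E i) (Sch j)) :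
    (fun t => R₀ t * ∏ i ∈ I, margOver (E i) (F i) t)
      = margOver (I.biUnion E) (fun t => R₀ t * ∏ i ∈ I, F i t) := by
  induction I using Finset.induction with
  | empty =>
    rw [Finset.biUnion_empty, margOver_empty]
    funext t
    simp
  | @insert i I hiI IH =>
    have hF' : ∀ j ∈ I, DependsOnlyOn (F j) (Sch j) := fun j hj => hF j (Finset.mem_insert_of_mem hj)
    have IH' := IH hF' (fun j hj => hES j (Finset.mem_insert_of_mem hj))
      (fun j hj => hE0 j (Finset.mem_insert_of_mem hj))
      (fun j hj k hk hjk => hEE j (Finset.mem_insert_of_mem hj) k (Finset.mem_insert_of_mem hk) hjk)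
    have hiI' : i ∈ insert i I := Finset.mem_insert_self i I
    -- G = R₀ * ∏_I F, depends only on S₀ ∪ I.sup Sch
    set Gf : (∀ a, Val a) → D := fun t => R₀ t * ∏ j ∈ I, F j t with hGf
    have hGdep : DependsOnlyOn Gf (S₀ ∪ I.sup Sch) := by
      intro t₁ t₂ ht
      simp only [hGf]
      exact congrArg₂ (· * ·) (hR₀ t₁ t₂ (fun a ha => ht a (Finset.mem_union_left _ ha)))
        (Finset.prod_congr rfl fun j hj => hF' j hj t₁ t₂
          (fun a ha => ht a (Finset.mem_union_right _ (Finset.mem_sup.2 ⟨j, hj, ha⟩))))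
    have hdisj : Disjoint (E i) (S₀ ∪ I.sup Sch) := by
      rw [Finset.disjoint_union_right]
      refine ⟨hE0 i hiI', ?_⟩
      rw [Finset.disjoint_sup_right]
      intro j hj
      exact hEE i hiI' j (Finset.mem_insert_of_mem hj) (fun h => hiI (h ▸ hj))
    -- margOver (E i) (F i) depends only on Sch i \ E i
    have hMdep : DependsOnlyOn (margOver (E i) (F i)) (Sch i \ E i) :=
      (hF i hiI').margOver
    have hMdisj : Disjoint (Sch i \ E i) (I.biUnion E) := by
      rw [Finset.disjoint_biUnion_right]
      intro j hj
      exact Finset.disjoint_of_subset_left Finset.sdiff_subset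
        (hEE j (Finset.mem_insert_of_mem hj) i hiI' (fun h => hiI (h ▸ hj))).symm
    have step1 : (fun t => R₀ t * ∏ j ∈ insert i I, margOver (E j) (F j) t)
        = fun t => margOver (E i) (F i) t * margOver (I.biUnion E) Gf t := by
      funext t
      have h1 : R₀ t * ∏ j ∈ I, margOver (E j) (F j) t = margOver (I.biUnion E) Gf t :=
        congrFun IH' t
      rw [Finset.prod_insert hiI, ← mul_assoc, mul_comm (R₀ t), mul_assoc, h1]
    rw [step1]
    have step2 : (fun t => margOver (E i) (F i) t * margOver (I.biUnion E) Gf t)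
        = margOver (I.biUnion E) (fun t => margOver (E i) (F i) t * Gf t) := by
      rw [margOver_mul_left hMdep hMdisj]
    rw [step2]
    have step3 : (fun t => margOver (E i) (F i) t * Gf t)
        = margOver (E i) (fun t => Gf t * F i t) := by
      rw [margOver_mul_left hGdep hdisj.symm]
      funext t; ring
    have hdisj2 : Disjoint (I.biUnion E) (E i) := by
      rw [Finset.disjoint_biUnion_left]
      intro j hj
      exact Finset.disjoint_of_subset_left (hES j (Finset.mem_insert_of_mem hj))
        (hEE i hiI' j (Finset.mem_insert_of_mem hj) (fun h => hiI (h ▸ hj))).symm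
    have huni : I.biUnion E ∪ E i = (insert i I).biUnion E := by
      rw [Finset.biUnion_insert]; exact Finset.union_comm _ _
    rw [step3, margOver_margOver hdisj2, huni]
    have hfin : (fun t => Gf t * F i t) = (fun t => R₀ t * ∏ j ∈ insert i I, F j t) := by
      funext t
      simp only [hGf]
      rw [Finset.prod_insert hiI]
      ring
    rw [hfin]

variable {V : Type*} [Fintype V] [DecidableEq V]

/-- `w` lies in the subtree rooted at `u` away from `v`: there is a walk from
`w` to `u` that avoids `v`. -/
def InSubtree (G : SimpleGraph V) (u v w : V) : Prop :=
  ∃ p : G.Walk w u, v ∉ p.support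

/-- The running intersection property: if an attribute belongs to two bags then
it belongs to every bag on the path between them. -/
def RunningIntersection (G : SimpleGraph V) (bag : V → Finset Att) : Prop :=
  ∀ (a : Att) (u v : V) (p : G.Walk u v), p.IsPath →
    a ∈ bag u → a ∈ bag v → ∀ w ∈ p.support, a ∈ bag w

/-- `M` is a message system for the junction tree `(G, bag)` with local
relations `L`: the message `u → v` marginalizes, onto the attributes shared by
`u` and `v`, the join of `u`'s local relation with all incoming messages from
`u`'s neighbors other than `v`. -/
def MsgSystem (G : SimpleGraph V) [DecidableRel G.Adj] (bag : V → Finset Att)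
    (L : V → (∀ a, Val a) → D) (M : V → V → (∀ a, Val a) → D) : Prop :=
  ∀ u v, G.Adj u v →
    M u v = margOver (bag u \ bag v)
      (fun t => L u t * ∏ w ∈ (G.neighborFinset u).erase v, M w u t)

/-- Absorption at a bag: join of its local relation with all incoming messages. -/
def absorb (G : SimpleGraph V) [DecidableRel G.Adj]
    (L : V → (∀ a, Val a) → D) (M : V → V → (∀ a, Val a) → D) (v : V) :
    (∀ a, Val a) → D :=
  fun t => L v t * ∏ w ∈ G.neighborFinset v, M w v t

noncomputable def subT (G : SimpleGraph V) (u v : V) : Finset V :=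
  @Finset.filter _ (fun w => InSubtree G u v w) (Classical.decPred _) Finset.univ

lemma mem_subT {G : SimpleGraph V} {u v w : V} :
    w ∈ subT G u v ↔ InSubtree G u v w := by
  simp [subT, Finset.mem_filter]

lemma self_mem_subT {G : SimpleGraph V} {u v : V} (h : u ≠ v) : u ∈ subT G u v :=
  mem_subT.2 ⟨SimpleGraph.Walk.nil, by simp [h.symm]⟩

lemma not_mem_subT_self {G : SimpleGraph V} {u w : V} : u ∉ subT G w u := by
  rw [mem_subT]
  rintro ⟨p, hp⟩
  exact hp p.start_mem_support

-- from a member of subT G u v, get a path to u avoiding v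
lemma exists_path_avoiding {G : SimpleGraph V} {u v x : V} (hx : x ∈ subT G u v) :
    ∃ p : G.Walk x u, p.IsPath ∧ v ∉ p.support := by
  obtain ⟨q, hq⟩ := mem_subT.1 hx
  exact ⟨q.bypass, q.bypass_isPath, fun h => hq (q.support_bypass_subset h)⟩

-- every vertex on a u-avoiding walk to w is in subT G w u
lemma support_subset_subT {G : SimpleGraph V} {u w x : V} (p : G.Walk x w)
    (hp : u ∉ p.support) : ∀ z ∈ p.support, z ∈ subT G w u := by
  intro z hz
  exact mem_subT.2 ⟨p.dropUntil z hz, fun h => hp ((p.support_dropUntil_subset hz) h)⟩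

-- a path from x to v through u, for x in the subtree of u away from v
lemma exists_path_through {G : SimpleGraph V} {u v x : V} (huv : G.Adj u v)
    (hx : x ∈ subT G u v) :
    ∃ p : G.Walk x v, p.IsPath ∧ u ∈ p.support := by
  obtain ⟨q, hq, hqv⟩ := exists_path_avoiding hx
  refine ⟨q.concat huv, ?_, ?_⟩
  · rw [← SimpleGraph.Walk.isPath_reverse_iff, SimpleGraph.Walk.reverse_concat]
    exact hq.reverse.cons (by simpa [SimpleGraph.Walk.support_reverse] using hqv)
  · rw [SimpleGraph.Walk.support_concat]
    exact List.mem_append.2 (Or.inl q.end_mem_support)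

lemma subT_closed {G : SimpleGraph V} {u w x y : V} (hx : x ∈ subT G w u)
    (r : G.Walk y x) (hr : u ∉ r.support) : y ∈ subT G w u := by
  obtain ⟨q, hq⟩ := mem_subT.1 hx
  refine mem_subT.2 ⟨r.append q, ?_⟩
  rw [SimpleGraph.Walk.mem_support_append_iff]
  rintro (h | h) <;> [exact hr h; exact hq h]

lemma subT_disjoint {G : SimpleGraph V} (hG : G.IsTree) {u w w' : V}
    (huw : G.Adj u w) (huw' : G.Adj u w') (hne : w ≠ w') :
    Disjoint (subT G w u) (subT G w' u) := by
  rw [Finset.disjoint_left]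
  intro x hx hx'
  obtain ⟨q1, hq1, hq1u⟩ := exists_path_avoiding hx
  obtain ⟨q2, hq2, hq2u⟩ := exists_path_avoiding hx'
  have hp1 : (q1.reverse.append q2).bypass.IsPath := (q1.reverse.append q2).bypass_isPath
  have hup1 : u ∉ (q1.reverse.append q2).bypass.support := by
    intro h
    have := (q1.reverse.append q2).support_bypass_subset h
    rw [SimpleGraph.Walk.mem_support_append_iff, SimpleGraph.Walk.support_reverse,
      List.mem_reverse] at this
    rcases this with h' | h' <;> [exact hq1u h'; exact hq2u h']
  set p2 : G.Walk w w' := SimpleGraph.Walk.cons huw.symm (SimpleGraph.Walk.cons huw'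
    SimpleGraph.Walk.nil) with hp2def
  have hp2 : p2.IsPath := by
    rw [hp2def]
    simp [SimpleGraph.Walk.cons_isPath_iff, huw.ne, huw.ne', huw'.ne, huw'.ne', hne]
  have := ((hG.existsUnique_path w w').unique hp1 hp2)
  apply hup1
  rw [this, hp2def]
  simp

lemma subtree_step {G : SimpleGraph V} {u x : V} (p : G.Walk x u) (hp : p.IsPath)
    (hxu : x ≠ u) : ∃ w, G.Adj u w ∧ x ∈ subT G w u ∧ w ∈ p.support := by
  obtain ⟨w, h, q, hq⟩ := SimpleGraph.Walk.exists_eq_cons_of_ne (Ne.symm hxu) p.reverse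
  have hrev : p.reverse.IsPath := hp.reverse
  rw [hq, SimpleGraph.Walk.cons_isPath_iff] at hrev
  refine ⟨w, h, mem_subT.2 ⟨q.reverse, ?_⟩, ?_⟩
  · rw [SimpleGraph.Walk.support_reverse, List.mem_reverse]
    exact hrev.2
  · have : w ∈ p.reverse.support := by rw [hq]; simp [q.start_mem_support]
    rwa [SimpleGraph.Walk.support_reverse, List.mem_reverse] at this

lemma subT_neighbor_subset {G : SimpleGraph V} (hG : G.IsTree) {u v w : V}
    (huv : G.Adj u v) (huw : G.Adj u w) (hwv : w ≠ v) :
    subT G w u ⊆ subT G u v := by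
  intro x hx
  obtain ⟨q, hq, hqu⟩ := exists_path_avoiding hx
  refine mem_subT.2 ⟨q.concat huw.symm, ?_⟩
  rw [SimpleGraph.Walk.support_concat]
  intro hmem
  rcases List.mem_append.1 hmem with h | h
  · have hvsub : v ∈ subT G w u := support_subset_subT q hqu v h
    have : v ∈ subT G v u := self_mem_subT huv.ne'
    exact Finset.disjoint_left.1 (subT_disjoint hG huw huv hwv) hvsub this
  · simp only [List.mem_singleton] at h
    exact huv.ne' h

lemma subT_eq_insert_biUnion {G : SimpleGraph V} [DecidableRel G.Adj] (hG : G.IsTree) {u v : V} (huv : G.Adj u v) :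
    subT G u v = insert u (((G.neighborFinset u).erase v).biUnion fun w => subT G w u) := by
  apply Finset.Subset.antisymm
  · intro x hx
    by_cases hxu : x = u
    · exact hxu ▸ Finset.mem_insert_self _ _
    · obtain ⟨p, hp, hpv⟩ := exists_path_avoiding hx
      obtain ⟨w, huw, hxw, hwp⟩ := subtree_step p hp hxu
      refine Finset.mem_insert_of_mem (Finset.mem_biUnion.2 ⟨w, ?_, hxw⟩)
      refine Finset.mem_erase.2 ⟨fun h => hpv (h ▸ hwp), ?_⟩
      rwa [SimpleGraph.mem_neighborFinset]
  · intro x hx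
    rcases Finset.mem_insert.1 hx with rfl | hx
    · exact self_mem_subT huv.ne
    · obtain ⟨w, hw, hxw⟩ := Finset.mem_biUnion.1 hx
      obtain ⟨hwv, hw⟩ := Finset.mem_erase.1 hw
      rw [SimpleGraph.mem_neighborFinset] at hw
      exact subT_neighbor_subset hG huv hw hwv hxw

lemma univ_eq_insert_biUnion {G : SimpleGraph V} [DecidableRel G.Adj] (hG : G.IsTree) (u : V) :
    (Finset.univ : Finset V) = insert u ((G.neighborFinset u).biUnion fun w => subT G w u) := by
  apply Finset.Subset.antisymm
  · intro x _
    by_cases hxu : x = u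
    · exact hxu ▸ Finset.mem_insert_self _ _
    · obtain ⟨p⟩ := hG.isConnected.preconnected x u
      obtain ⟨w, huw, hxw, _⟩ := subtree_step p.bypass p.bypass_isPath hxu
      refine Finset.mem_insert_of_mem (Finset.mem_biUnion.2 ⟨w, ?_, hxw⟩)
      rwa [SimpleGraph.mem_neighborFinset]
  · intro x _; exact Finset.mem_univ x

lemma rip_subtree {G : SimpleGraph V} {bag : V → Finset Att}
    (hRI : RunningIntersection G bag) {u v x : V} {a : Att} (huv : G.Adj u v)
    (hx : x ∈ subT G u v) (hax : a ∈ bag x) (hav : a ∈ bag v) : a ∈ bag u := by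
  obtain ⟨p, hp, hup⟩ := exists_path_through huv hx
  exact hRI a x v p hp hax hav u hup

lemma rip_two {G : SimpleGraph V} (hG : G.IsTree) {bag : V → Finset Att}
    (hRI : RunningIntersection G bag) {u w w' x y : V} {a : Att}
    (huw : G.Adj u w) (huw' : G.Adj u w') (hne : w ≠ w')
    (hx : x ∈ subT G w u) (hy : y ∈ subT G w' u)
    (hax : a ∈ bag x) (hay : a ∈ bag y) : a ∈ bag u := by
  obtain ⟨r⟩ := hG.isConnected.preconnected x y
  by_cases hu : u ∈ r.bypass.support
  · exact hRI a x y r.bypass r.bypass_isPath hax hay u hu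
  · exfalso
    have hy' : y ∈ subT G w u := subT_closed hx r.bypass.reverse
      (by rwa [SimpleGraph.Walk.support_reverse, List.mem_reverse])
    exact Finset.disjoint_left.1 (subT_disjoint hG huw huw' hne) hy' hy

lemma msg_eq {G : SimpleGraph V} [DecidableRel G.Adj] (hG : G.IsTree)
    {bag : V → Finset Att} (hRI : RunningIntersection G bag)
    {L : V → (∀ a, Val a) → D} (hL : ∀ v, DependsOnlyOn (L v) (bag v))
    {M : V → V → (∀ a, Val a) → D} (hM : MsgSystem G bag L M) :
    ∀ (n : ℕ) (u v : V), G.Adj u v → (subT G u v).card = n →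
      M u v = margOver ((subT G u v).sup bag \ bag v)
        (fun t => ∏ x ∈ subT G u v, L x t) := by
  intro n
  induction n using Nat.strong_induction_on with
  | _ n IH =>
  intro u v huv hcard
  set I : Finset V := (G.neighborFinset u).erase v with hI
  have hadj : ∀ w ∈ I, G.Adj u w ∧ w ≠ v := by
    intro w hw
    obtain ⟨h1, h2⟩ := Finset.mem_erase.1 hw
    rw [SimpleGraph.mem_neighborFinset] at h2
    exact ⟨h2, h1⟩
  -- induction hypothesis applied to each incoming message
  have hIH : ∀ w ∈ I, M w u = margOver ((subT G w u).sup bag \ bag u)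
      (fun t => ∏ x ∈ subT G w u, L x t) := by
    intro w hw
    obtain ⟨huw, hwv⟩ := hadj w hw
    have hsub : subT G w u ⊆ subT G u v := subT_neighbor_subset hG huv huw hwv
    have hlt : (subT G w u).card < n := by
      rw [← hcard]
      refine Finset.card_lt_card (Finset.ssubset_iff_of_subset hsub |>.2
        ⟨u, self_mem_subT huv.ne, not_mem_subT_self⟩)
    exact IH _ hlt w u huw.symm rfl
  have hEE : ∀ i ∈ I, ∀ j ∈ I, i ≠ j →
      Disjoint ((subT G i u).sup bag \ bag u) ((subT G j u).sup bag) := by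
    intro i hi j hj hij
    rw [Finset.disjoint_left]
    intro a ha haj
    obtain ⟨ha1, ha2⟩ := Finset.mem_sdiff.1 ha
    obtain ⟨x, hx, hax⟩ := Finset.mem_sup.1 ha1
    obtain ⟨y, hy, hay⟩ := Finset.mem_sup.1 haj
    exact ha2 (rip_two hG hRI (hadj i hi).1 (hadj j hj).1 hij hx hy hax hay)
  have hcomb := combine I (fun w => (subT G w u).sup bag \ bag u)
    (fun w => (subT G w u).sup bag)
    (fun w => fun t => ∏ x ∈ subT G w u, L x t) (bag u) (L u) (hL u)
    (fun w _ => dependsOnlyOn_finset_prod (fun x _ => hL x))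
    (fun w _ => Finset.sdiff_subset)
    (fun w _ => Finset.sdiff_disjoint)
    hEE
  rw [hM u v huv]
  have hmsg : (fun t => L u t * ∏ w ∈ I, M w u t)
      = fun t => L u t * ∏ w ∈ I, margOver ((subT G w u).sup bag \ bag u)
          (fun t => ∏ x ∈ subT G w u, L x t) t := by
    funext t
    congr 1
    exact Finset.prod_congr rfl fun w hw => by rw [hIH w hw]
  rw [hmsg, hcomb]
  -- identify the joined relation with the product over the subtree
  have hdisjI : ∀ i ∈ I, ∀ j ∈ I, i ≠ j → Disjoint (subT G i u) (subT G j u) :=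
    fun i hi j hj hij => subT_disjoint hG (hadj i hi).1 (hadj j hj).1 hij
  have huB : u ∉ I.biUnion fun w => subT G w u := by
    rw [Finset.mem_biUnion]
    rintro ⟨w, hw, hu⟩
    exact not_mem_subT_self hu
  have hST : subT G u v = insert u (I.biUnion fun w => subT G w u) :=
    subT_eq_insert_biUnion hG huv
  have hprod : (fun t => L u t * ∏ w ∈ I, ∏ x ∈ subT G w u, L x t)
      = fun t => ∏ x ∈ subT G u v, L x t := by
    funext t
    rw [hST, Finset.prod_insert huB, Finset.prod_biUnion hdisjI]
  have hdisjEl : Disjoint (bag u \ bag v)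
      (I.biUnion fun w => (subT G w u).sup bag \ bag u) := by
    rw [Finset.disjoint_biUnion_right]
    intro w hw
    exact Finset.disjoint_of_subset_left Finset.sdiff_subset Finset.sdiff_disjoint.symm
  have hsup : (subT G u v).sup bag = bag u ∪ I.sup fun w => (subT G w u).sup bag := by
    rw [hST, Finset.sup_insert, Finset.sup_biUnion, Finset.sup_eq_union]
  have hkey : ∀ a, a ∈ (I.sup fun w => (subT G w u).sup bag) → a ∈ bag v → a ∈ bag u := by
    intro a ha hav
    obtain ⟨w, hw, haw⟩ := Finset.mem_sup.1 ha
    obtain ⟨x, hx, hax⟩ := Finset.mem_sup.1 haw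
    obtain ⟨huw, hwv⟩ := hadj w hw
    exact rip_subtree hRI huv (subT_neighbor_subset hG huv huw hwv hx) hax hav
  have hbiU : I.biUnion (fun w => (subT G w u).sup bag \ bag u)
      = (I.sup fun w => (subT G w u).sup bag) \ bag u := by
    ext a
    simp only [Finset.mem_biUnion, Finset.mem_sdiff, Finset.mem_sup]
    constructor
    · rintro ⟨w, hw, h1, h2⟩
      exact ⟨⟨w, hw, h1⟩, h2⟩
    · rintro ⟨⟨w, hw, h1⟩, h2⟩
      exact ⟨w, hw, h1, h2⟩
  have hset : (bag u \ bag v) ∪ I.biUnion (fun w => (subT G w u).sup bag \ bag u)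
      = (subT G u v).sup bag \ bag v := by
    rw [hbiU, hsup]
    ext a
    constructor
    · intro h
      rcases Finset.mem_union.1 h with h' | h'
      · obtain ⟨h1, h2⟩ := Finset.mem_sdiff.1 h'
        exact Finset.mem_sdiff.2 ⟨Finset.mem_union_left _ h1, h2⟩
      · obtain ⟨h1, h2⟩ := Finset.mem_sdiff.1 h'
        exact Finset.mem_sdiff.2 ⟨Finset.mem_union_right _ h1,
          fun hav => h2 (hkey a h1 hav)⟩
    · intro h
      obtain ⟨h1, h2⟩ := Finset.mem_sdiff.1 h
      rcases Finset.mem_union.1 h1 with h' | h'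
      · exact Finset.mem_union_left _ (Finset.mem_sdiff.2 ⟨h', h2⟩)
      · by_cases hau : a ∈ bag u
        · exact Finset.mem_union_left _ (Finset.mem_sdiff.2 ⟨hau, h2⟩)
        · exact Finset.mem_union_right _ (Finset.mem_sdiff.2 ⟨h', hau⟩)
  rw [hprod, margOver_margOver hdisjEl, hset]

lemma absorb_eq {G : SimpleGraph V} [DecidableRel G.Adj] (hG : G.IsTree)
    {bag : V → Finset Att} (hRI : RunningIntersection G bag)
    {L : V → (∀ a, Val a) → D} (hL : ∀ v, DependsOnlyOn (L v) (bag v))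
    {M : V → V → (∀ a, Val a) → D} (hM : MsgSystem G bag L M) (u : V) :
    absorb G L M u = margOver (Finset.univ.sup bag \ bag u) (fun t => ∏ w, L w t) := by
  set I : Finset V := G.neighborFinset u with hI
  have hadj : ∀ w ∈ I, G.Adj u w := fun w hw => by
    rw [hI, SimpleGraph.mem_neighborFinset] at hw; exact hw
  have hIH : ∀ w ∈ I, M w u = margOver ((subT G w u).sup bag \ bag u)
      (fun t => ∏ x ∈ subT G w u, L x t) :=
    fun w hw => msg_eq hG hRI hL hM _ w u (hadj w hw).symm rfl
  have hEE : ∀ i ∈ I, ∀ j ∈ I, i ≠ j →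
      Disjoint ((subT G i u).sup bag \ bag u) ((subT G j u).sup bag) := by
    intro i hi j hj hij
    rw [Finset.disjoint_left]
    intro a ha haj
    obtain ⟨ha1, ha2⟩ := Finset.mem_sdiff.1 ha
    obtain ⟨x, hx, hax⟩ := Finset.mem_sup.1 ha1
    obtain ⟨y, hy, hay⟩ := Finset.mem_sup.1 haj
    exact ha2 (rip_two hG hRI (hadj i hi) (hadj j hj) hij hx hy hax hay)
  have hcomb := combine I (fun w => (subT G w u).sup bag \ bag u)
    (fun w => (subT G w u).sup bag)
    (fun w => fun t => ∏ x ∈ subT G w u, L x t) (bag u) (L u) (hL u)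
    (fun w _ => dependsOnlyOn_finset_prod (fun x _ => hL x))
    (fun w _ => Finset.sdiff_subset)
    (fun w _ => Finset.sdiff_disjoint)
    hEE
  have habs : absorb G L M u = fun t => L u t * ∏ w ∈ I, M w u t := rfl
  have hmsg : (fun t => L u t * ∏ w ∈ I, M w u t)
      = fun t => L u t * ∏ w ∈ I, margOver ((subT G w u).sup bag \ bag u)
          (fun t => ∏ x ∈ subT G w u, L x t) t := by
    funext t
    congr 1
    exact Finset.prod_congr rfl fun w hw => by rw [hIH w hw]
  have hdisjI : ∀ i ∈ I, ∀ j ∈ I, i ≠ j → Disjoint (subT G i u) (subT G j u) :=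
    fun i hi j hj hij => subT_disjoint hG (hadj i hi) (hadj j hj) hij
  have huB : u ∉ I.biUnion fun w => subT G w u := by
    rw [Finset.mem_biUnion]
    rintro ⟨w, hw, hu⟩
    exact not_mem_subT_self hu
  have hUV : (Finset.univ : Finset V) = insert u (I.biUnion fun w => subT G w u) :=
    univ_eq_insert_biUnion hG u
  have hprod : (fun t => L u t * ∏ w ∈ I, ∏ x ∈ subT G w u, L x t)
      = fun t => ∏ x : V, L x t := by
    funext t
    rw [show (∏ x : V, L x t) = ∏ x ∈ (Finset.univ : Finset V), L x t from rfl, hUV,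
      Finset.prod_insert huB, Finset.prod_biUnion hdisjI]
  have hsup : Finset.univ.sup bag = bag u ∪ I.sup fun w => (subT G w u).sup bag := by
    rw [hUV, Finset.sup_insert, Finset.sup_biUnion, Finset.sup_eq_union]
  have hbiU : I.biUnion (fun w => (subT G w u).sup bag \ bag u)
      = (I.sup fun w => (subT G w u).sup bag) \ bag u := by
    ext a
    simp only [Finset.mem_biUnion, Finset.mem_sdiff, Finset.mem_sup]
    constructor
    · rintro ⟨w, hw, h1, h2⟩
      exact ⟨⟨w, hw, h1⟩, h2⟩
    · rintro ⟨⟨w, hw, h1⟩, h2⟩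
      exact ⟨w, hw, h1, h2⟩
  have hset : I.biUnion (fun w => (subT G w u).sup bag \ bag u)
      = Finset.univ.sup bag \ bag u := by
    rw [hbiU, hsup]
    ext a
    constructor
    · intro h
      obtain ⟨h1, h2⟩ := Finset.mem_sdiff.1 h
      exact Finset.mem_sdiff.2 ⟨Finset.mem_union_right _ h1, h2⟩
    · intro h
      obtain ⟨h1, h2⟩ := Finset.mem_sdiff.1 h
      rcases Finset.mem_union.1 h1 with h' | h'
      · exact absurd h' h2
      · exact Finset.mem_sdiff.2 ⟨h', h2⟩
  rw [habs, hmsg, hcomb, hprod, hset]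


/-- Calibration consistency: in a calibrated junction tree (messages along all
directed edges), for every edge `(u, v)` the marginal of the absorption at `u`
onto `bag u ∩ bag v` equals the marginal of the absorption at `v` onto
`bag u ∩ bag v`, and both equal the marginalization of the full join of all
base relations onto `bag u ∩ bag v`. -/
theorem calibration_consistency (G : SimpleGraph V) [DecidableRel G.Adj]
    (hG : G.IsTree) (bag : V → Finset Att)
    (hRI : RunningIntersection G bag)
    (L : V → (∀ a, Val a) → D)
    (hL : ∀ v, DependsOnlyOn (L v) (bag v))
    (M : V → V → (∀ a, Val a) → D) (hM : MsgSystem G bag L M)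
    (u v : V) (huv : G.Adj u v) :
    margOver (bag u \ (bag u ∩ bag v)) (absorb G L M u) =
        margOver (bag v \ (bag u ∩ bag v)) (absorb G L M v) ∧
      margOver (bag u \ (bag u ∩ bag v)) (absorb G L M u) =
        margOver ((Finset.univ.sup bag) \ (bag u ∩ bag v)) (fun t => ∏ w, L w t) := by
  have key : ∀ (u v : V), G.Adj u v →
      margOver (bag u \ (bag u ∩ bag v)) (absorb G L M u)
        = margOver ((Finset.univ.sup bag) \ (bag u ∩ bag v)) (fun t => ∏ w, L w t) := by
    intro u v huv
    have hsub : bag u ⊆ Finset.univ.sup bag := Finset.le_sup (Finset.mem_univ u)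
    have hdisj : Disjoint (bag u \ (bag u ∩ bag v)) (Finset.univ.sup bag \ bag u) :=
      Finset.disjoint_of_subset_left Finset.sdiff_subset Finset.sdiff_disjoint.symm
    have hset : (bag u \ (bag u ∩ bag v)) ∪ (Finset.univ.sup bag \ bag u)
        = Finset.univ.sup bag \ (bag u ∩ bag v) := by
      ext a
      constructor
      · intro h
        rcases Finset.mem_union.1 h with h' | h'
        · obtain ⟨h1, h2⟩ := Finset.mem_sdiff.1 h'
          exact Finset.mem_sdiff.2 ⟨hsub h1, h2⟩
        · obtain ⟨h1, h2⟩ := Finset.mem_sdiff.1 h'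
          exact Finset.mem_sdiff.2 ⟨h1, fun hc => h2 (Finset.mem_inter.1 hc).1⟩
      · intro h
        obtain ⟨h1, h2⟩ := Finset.mem_sdiff.1 h
        by_cases hau : a ∈ bag u
        · exact Finset.mem_union_left _ (Finset.mem_sdiff.2 ⟨hau, h2⟩)
        · exact Finset.mem_union_right _ (Finset.mem_sdiff.2 ⟨h1, hau⟩)
    rw [absorb_eq hG hRI hL hM u, margOver_margOver hdisj, hset]
  refine ⟨?_, key u v huv⟩
  rw [key u v huv, Finset.inter_comm (bag u) (bag v)]
  exact (key v u huv.symm).symm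
end

section
/- Query result independence of group-by annotation placement: in an annotated junction tree, for a group-by attribute A, annotating any single bag containing A with γ_A (preventing A from being marginalized in messages emitted by that bag and all downstream bags toward the root) yields the same final query result at the root, for any choice of the annotated bag among those containing A. -/
open Finset

variable {Att : Type*} [Fintype Att] [DecidableEq Att]
variable {Val : Att → Type*} [∀ a, Fintype (Val a)] [∀ a, DecidableEq (Val a)]
variable {D : Type*} [CommSemiring D]

variable {V : Type*} [Fintype V] [DecidableEq V]

open scoped Classical in
/-- Message system for a junction tree with a group-by annotation `γ_A` on bag
`b`: the attribute `A` is not marginalized out in messages emitted by `b` or by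
any bag downstream of `b` (i.e. on any edge `u → v` such that `b` lies in the
subtree rooted at `u` away from `v`). -/
def MsgSystemGB (G : SimpleGraph V) [DecidableRel G.Adj] (bag : V → Finset Att)
    (L : V → (∀ a, Val a) → D) (A : Att) (b : V)
    (M : V → V → (∀ a, Val a) → D) : Prop :=
  ∀ u v, G.Adj u v →
    M u v = margOver ((bag u \ bag v) \
        (if InSubtree G u v b then {A} else ∅))
      (fun t => L u t * ∏ w ∈ (G.neighborFinset u).erase v, M w u t)


section AuxProof

open SimpleGraph

variable {V : Type*} [Fintype V] [DecidableEq V]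

lemma inSubtree_self {G : SimpleGraph V} {u v : V} (h : G.Adj u v) :
    InSubtree G u v u :=
  ⟨SimpleGraph.Walk.nil, by simp [h.ne']⟩

lemma not_inSubtree_start {G : SimpleGraph V} {w u : V} :
    ¬ InSubtree G w u u := fun ⟨p, hp⟩ => hp p.start_mem_support

lemma inSubtree_step {G : SimpleGraph V} (hG : G.IsTree) {u v w : V}
    (huv : G.Adj u v) (huw : G.Adj u w) (hwv : w ≠ v) {x : V}
    (hx : InSubtree G w u x) : InSubtree G u v x := by
  obtain ⟨p, hp⟩ := hx
  refine ⟨p.append (SimpleGraph.Walk.cons huw.symm SimpleGraph.Walk.nil), ?_⟩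
  rw [SimpleGraph.Walk.support_append]
  simp only [List.mem_append, SimpleGraph.Walk.support_cons,
    SimpleGraph.Walk.support_nil, List.tail_cons, List.mem_singleton]
  rintro (hv | hv)
  · -- v ∈ p.support : contradiction via path uniqueness
    set d := (p.dropUntil v hv).toPath with hd
    have hud : u ∉ d.1.support := fun h =>
      hp (p.support_dropUntil_subset hv ((SimpleGraph.Walk.support_toPath_subset _) h))
    have he : (SimpleGraph.Walk.cons huv.symm
        (SimpleGraph.Walk.cons huw SimpleGraph.Walk.nil) : G.Walk v w).IsPath := by
      simp [SimpleGraph.Walk.isPath_def, huv.ne', huw.ne, hwv.symm]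
    have hpe := hG.IsAcyclic.path_unique ⟨_, he⟩ d
    apply hud
    rw [← hpe]
    simp
  · exact huv.ne' hv

lemma cross_mem {Att : Type*} [DecidableEq Att] {G : SimpleGraph V}
    (hG : G.IsTree) {bag : V → Finset Att}
    (hRI : RunningIntersection G bag) {A : Att} {c₁ c₂ : V}
    (hc₁ : A ∈ bag c₁) (hc₂ : A ∈ bag c₂) {u v : V}
    (h1 : InSubtree G u v c₁) (h2 : ¬ InSubtree G u v c₂) : A ∈ bag v := by
  obtain ⟨q, hq⟩ := h1
  obtain ⟨w0⟩ := hG.isConnected.preconnected c₂ c₁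
  have hv : v ∈ w0.toPath.1.support := by
    by_contra hv
    refine h2 ⟨w0.toPath.1.append q, ?_⟩
    rw [SimpleGraph.Walk.support_append]
    simp only [List.mem_append]
    rintro (h | h)
    · exact hv h
    · exact hq (List.mem_of_mem_tail h)
  exact hRI A c₂ c₁ w0.toPath.1 w0.toPath.2 hc₂ hc₁ v hv

lemma msg_unique {Att : Type*} [Fintype Att] [DecidableEq Att]
    {Val : Att → Type*} [∀ a, Fintype (Val a)] [∀ a, DecidableEq (Val a)]
    {D : Type*} [CommSemiring D]
    (G : SimpleGraph V) [DecidableRel G.Adj] (hG : G.IsTree)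
    (S : V → V → Finset Att) (L : V → (∀ a, Val a) → D)
    (M₁ M₂ : V → V → (∀ a, Val a) → D)
    (h₁ : ∀ u v, G.Adj u v → M₁ u v = margOver (S u v)
      (fun t => L u t * ∏ w ∈ (G.neighborFinset u).erase v, M₁ w u t))
    (h₂ : ∀ u v, G.Adj u v → M₂ u v = margOver (S u v)
      (fun t => L u t * ∏ w ∈ (G.neighborFinset u).erase v, M₂ w u t))
    {u v : V} (huv : G.Adj u v) : M₁ u v = M₂ u v := by
  classical
  suffices H : ∀ n (u v : V), G.Adj u v →
      (Finset.univ.filter (fun w => InSubtree G u v w)).card ≤ n → M₁ u v = M₂ u v from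
    H _ u v huv le_rfl
  intro n
  induction n with
  | zero =>
    intro u v huv hcard
    have : u ∈ Finset.univ.filter (fun w => InSubtree G u v w) := by
      simp [inSubtree_self huv]
    have := Finset.card_pos.mpr ⟨u, this⟩
    omega
  | succ n ih =>
    intro u v huv hcard
    have key : (fun t => L u t * ∏ w ∈ (G.neighborFinset u).erase v, M₁ w u t)
        = (fun t => L u t * ∏ w ∈ (G.neighborFinset u).erase v, M₂ w u t) := by
      funext t
      refine congrArg (L u t * ·) (Finset.prod_congr rfl fun w hw => ?_)
      obtain ⟨hne, hmem⟩ := Finset.mem_erase.mp hw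
      have hadj : G.Adj u w := (G.mem_neighborFinset u w).mp hmem
      have hsub : (Finset.univ.filter (fun x => InSubtree G w u x)) ⊆
          Finset.univ.filter (fun x => InSubtree G u v x) := by
        intro x hx
        simp only [Finset.mem_filter, Finset.mem_univ, true_and] at *
        exact inSubtree_step hG huv hadj hne hx
      have hss : (Finset.univ.filter (fun x => InSubtree G w u x)) ⊂
          Finset.univ.filter (fun x => InSubtree G u v x) :=
        (Finset.ssubset_iff_of_subset hsub).mpr
          ⟨u, by simp [inSubtree_self huv], by simp [not_inSubtree_start]⟩
      have hlt := Finset.card_lt_card hss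
      exact congrFun (ih w u hadj.symm (by omega)) t
    rw [h₁ u v huv, h₂ u v huv, key]

end AuxProof

/-- Independence of group-by annotation placement: annotating any single bag
containing the group-by attribute `A` with `γ_A` yields the same final query
result at the root (the absorption at the root marginalized onto the grouping
attribute `A`), for any choice of the annotated bag among those containing `A`. -/
theorem groupby_placement_independent (G : SimpleGraph V) [DecidableRel G.Adj]
    (hG : G.IsTree) (bag : V → Finset Att)
    (hRI : RunningIntersection G bag)
    (L : V → (∀ a, Val a) → D)
    (hL : ∀ v, DependsOnlyOn (L v) (bag v))
    (A : Att) (b₁ b₂ : V) (hb₁ : A ∈ bag b₁) (hb₂ : A ∈ bag b₂)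
    (M₁ M₂ : V → V → (∀ a, Val a) → D)
    (h₁ : MsgSystemGB G bag L A b₁ M₁) (h₂ : MsgSystemGB G bag L A b₂ M₂)
    (r : V) :
    margOver (bag r \ {A}) (absorb G L M₁ r) =
      margOver (bag r \ {A}) (absorb G L M₂ r) := by
  classical
  have hSeq : ∀ u v, G.Adj u v →
      ((bag u \ bag v) \ (if InSubtree G u v b₁ then {A} else ∅)) =
      ((bag u \ bag v) \ (if InSubtree G u v b₂ then {A} else ∅)) := by
    intro u v huv
    by_cases hx1 : InSubtree G u v b₁ <;> by_cases hx2 : InSubtree G u v b₂ <;>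
      simp only [hx1, hx2, if_true, if_false, Finset.sdiff_empty]
    · have hA : A ∈ bag v := cross_mem hG hRI hb₁ hb₂ hx1 hx2
      exact (Finset.sdiff_singleton_eq_erase _ _).trans (Finset.erase_eq_of_notMem (by simp [hA]))
    · have hA : A ∈ bag v := cross_mem hG hRI hb₂ hb₁ hx2 hx1
      exact ((Finset.sdiff_singleton_eq_erase _ _).trans (Finset.erase_eq_of_notMem (by simp [hA]))).symm
  have hM : ∀ u v, G.Adj u v → M₁ u v = M₂ u v := by
    intro u v huv
    refine msg_unique G hG
      (fun u v => (bag u \ bag v) \ (if InSubtree G u v b₁ then {A} else ∅))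
      L M₁ M₂ ?_ ?_ huv
    · intro u v h
      exact h₁ u v h
    · intro u v h
      rw [h₂ u v h, ← hSeq u v h]
  have habs : absorb G L M₁ r = absorb G L M₂ r := by
    funext t
    unfold absorb
    congr 1
    refine Finset.prod_congr rfl fun w hw => ?_
    have hadj : G.Adj r w := (G.mem_neighborFinset r w).mp hw
    exact congrFun (hM w r hadj.symm) t
  rw [habs]
end
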